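/- arXiv:2412.12411 — 6 statements merged into one kernel-verified Lean document; each statement's English description precedes it below -/
import Mathlib

section
/- Let K = {1, α₁, α₂, α₃} be a Klein four-group acting on an abelian group V that is 2-divisible. Define V_{α₁} = (tr_{α₁} ∘ ad_{α₂} ∘ ad_{α₃})(V), V_{α₂} = (ad_{α₁} ∘ tr_{α₂} ∘ ad_{α₃})(V), V_{α₃} = (ad_{α₁} ∘ ad_{α₂} ∘ tr_{α₃})(V), and C_K = (tr_{α₁} ∘ tr_{α₂} ∘ tr_{α₃})(V). Then V = V_{α₁} + V_{α₂} + V_{α₃} + C_K. -/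
/-- For an involution `α`, the trace map `tr_α = 1 + α`. -/
def trA {G V : Type*} [Group G] [AddCommGroup V] [DistribMulAction G V]
    (α : G) (v : V) : V := v + α • v

/-- For an involution `α`, the adjoint map `ad_α = 1 - α`. -/
def adA {G V : Type*} [Group G] [AddCommGroup V] [DistribMulAction G V]
    (α : G) (v : V) : V := v - α • v

/-- if a Klein four-group `K = {1, α₁, α₂, α₃}` acts on a `2`-divisible abelian
group `V`, then `V = V_{α₁} + V_{α₂} + V_{α₃} + C_K`. -/
theorem stmt6 {G V : Type*} [Group G] [AddCommGroup V] [DistribMulAction G V]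
    (α₁ α₂ α₃ : G) (h1 : orderOf α₁ = 2) (h2 : orderOf α₂ = 2)
    (hcomm : α₁ * α₂ = α₂ * α₁) (h3 : α₃ = α₁ * α₂)
    (hdiv : ∀ v : V, ∃ w : V, v = 2 • w) :
    ∀ v : V, ∃ x₁ x₂ x₃ x₀ : V,
      v = trA α₁ (adA α₂ (adA α₃ x₁)) + adA α₁ (trA α₂ (adA α₃ x₂)) +
          adA α₁ (adA α₂ (trA α₃ x₃)) + trA α₁ (trA α₂ (trA α₃ x₀)) := by
  intro v
  obtain ⟨w1, hw1⟩ := hdiv v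
  obtain ⟨w2, hw2⟩ := hdiv w1
  obtain ⟨w, hw3⟩ := hdiv w2
  refine ⟨w, w, w, w, ?_⟩
  have e1 : α₁ * α₁ = 1 := by
    have := pow_orderOf_eq_one α₁; rw [h1, sq] at this; exact this
  have e2 : α₂ * α₂ = 1 := by
    have := pow_orderOf_eq_one α₂; rw [h2, sq] at this; exact this
  have ss1 : ∀ u : V, α₁ • α₁ • u = u := by
    intro u; rw [smul_smul, e1, one_smul]
  have ss2 : ∀ u : V, α₂ • α₂ • u = u := by
    intro u; rw [smul_smul, e2, one_smul]
  have ss21 : ∀ u : V, α₂ • α₁ • u = α₁ • α₂ • u := by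
    intro u; rw [smul_smul, smul_smul, hcomm]
  subst h3 hw1 hw2 hw3
  simp only [trA, adA, mul_smul, smul_sub, smul_add, ss1, ss2, ss21]
  abel
end

section
/- Let p be a prime with p ≠ 2 and p ≠ 5. The Prüfer p-group C_{p^∞} admits an automorphism φ satisfying φ² = φ + 1 if and only if p ≡ ±1 (mod 5). -/
/-- The Prüfer `p`-group, realized as the `p`-primary component of `ℚ/ℤ`
(here `ℚ/ℤ` is `AddCircle (1 : ℚ)`). -/
def PruferGroup (p : ℕ) : AddSubgroup (AddCircle (1 : ℚ)) where
  carrier := {x | ∃ n : ℕ, p ^ n • x = 0}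
  zero_mem' := ⟨0, smul_zero _⟩
  add_mem' := by
    rintro x y ⟨n, hn⟩ ⟨m, hm⟩
    refine ⟨n + m, ?_⟩
    rw [smul_add, pow_add, mul_comm, mul_smul, hn, smul_zero, zero_add, mul_comm, mul_smul, hm, smul_zero]
  neg_mem' := by
    rintro x ⟨n, hn⟩
    exact ⟨n, by rw [smul_neg, hn, neg_zero]⟩

/-!
An automorphism `φ` with `φ² = φ + 1` preserves the subgroup of order `p` generated by `1/p`, on
which it is multiplication by a root of `x² - x - 1` modulo `p`. Conversely, such a root is simple
(the discriminant `5` is a unit mod `p`), so Hensel's lemma lifts it to `z ∈ ℤ_[p]`; every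
`p`-primary abelian group is a `ℤ_[p]`-module, and `z` acts on `C_{p^∞}` as an automorphism with
inverse `z - 1`. Finally `x² - x - 1` has a root mod `p` iff `5` is a square mod `p`, which by
quadratic reciprocity happens iff `p ≡ ±1 (mod 5)`.
-/

open Polynomial PadicInt

theorem exists_sq_eq_add_one_iff_isSquare_five {K : Type*} [Field K] [NeZero (2 : K)] :
    (∃ a : K, a ^ 2 = a + 1) ↔ IsSquare (5 : K) := by
  constructor
  · rintro ⟨a, ha⟩
    exact ⟨2 * a - 1, by linear_combination (-4) * ha⟩
  · rintro ⟨r, hr⟩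
    refine ⟨(1 + r) / 2, ?_⟩
    field_simp
    linear_combination -hr

theorem ZMod.isSquare_natCast_iff_mod_five (n : ℕ) :
    IsSquare (n : ZMod 5) ↔ n % 5 = 0 ∨ n % 5 = 1 ∨ n % 5 = 4 := by
  rw [← ZMod.natCast_mod]
  have : n % 5 < 5 := Nat.mod_lt n (by norm_num)
  interval_cases n % 5 <;> decide

theorem ZMod.isSquare_five_iff {p : ℕ} [Fact p.Prime] (hp2 : p ≠ 2) (hp5 : p ≠ 5) :
    IsSquare (5 : ZMod p) ↔ p % 5 = 1 ∨ p % 5 = 4 := by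
  have : Fact (Nat.Prime 5) := ⟨by norm_num⟩
  have hp : p % 5 ≠ 0 := fun h => hp5 ((Nat.prime_dvd_prime_iff_eq (by norm_num) Fact.out).1
    (Nat.dvd_of_mod_eq_zero h)).symm
  have := ZMod.exists_sq_eq_prime_iff_of_mod_four_eq_one (p := 5) (q := p) (by norm_num) hp2
  rw [Nat.cast_ofNat] at this
  rw [← this, ZMod.isSquare_natCast_iff_mod_five]
  omega

theorem PadicInt.toZMod_eq_zero_iff_norm_lt_one {p : ℕ} [Fact p.Prime] {z : ℤ_[p]} :
    toZMod z = 0 ↔ ‖z‖ < 1 := by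
  rw [← RingHom.mem_ker, ker_toZMod, IsLocalRing.mem_maximalIdeal, mem_nonunits]

theorem PadicInt.exists_isRoot_of_isRoot_map_toZMod {p : ℕ} [Fact p.Prime] {F : ℤ_[p][X]}
    {a : ZMod p} (ha : (F.map toZMod).IsRoot a) (hd : (F.map toZMod).derivative.eval a ≠ 0) :
    ∃ z : ℤ_[p], F.IsRoot z := by
  obtain ⟨a, rfl⟩ := ZMod.ringHom_surjective toZMod a
  rw [IsRoot, eval_map, eval₂_hom, toZMod_eq_zero_iff_norm_lt_one] at ha
  rw [derivative_map, eval_map, eval₂_hom, Ne, toZMod_eq_zero_iff_norm_lt_one, not_lt] at hd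
  have hd : ‖F.derivative.eval a‖ = 1 := le_antisymm (norm_le_one _) hd
  obtain ⟨z, hz, -⟩ := hensels_lemma (F := F) (a := a) (by
    simpa only [coe_aeval_eq_eval, hd, one_pow] using ha)
  exact ⟨z, hz⟩

theorem PadicInt.exists_sq_eq_add_one {p : ℕ} [Fact p.Prime] (h5 : (5 : ZMod p) ≠ 0)
    {a : ZMod p} (ha : a ^ 2 = a + 1) : ∃ z : ℤ_[p], z ^ 2 = z + 1 := by
  have hd : 2 * a - 1 ≠ 0 := fun h => h5 (by linear_combination (2 * a - 1) * h - 4 * ha)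
  obtain ⟨z, hz⟩ := exists_isRoot_of_isRoot_map_toZMod (F := X ^ 2 - X - 1) (a := a)
    (by
      simp only [Polynomial.map_sub, Polynomial.map_pow, map_X, Polynomial.map_one, IsRoot.def,
        eval_sub, eval_pow, eval_X, eval_one]
      linear_combination ha) (by simpa [one_add_one_eq_two] using hd)
  exact ⟨z, by
    simp only [IsRoot.def, eval_sub, eval_pow, eval_X, eval_one] at hz
    linear_combination hz⟩

section PadicAction

variable {p : ℕ} [Fact p.Prime] {G : Type*} [AddCommGroup G]

theorem PadicInt.val_toZModPow_modEq {n m : ℕ} (h : n ≤ m) (z : ℤ_[p]) :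
    (toZModPow m z).val ≡ (toZModPow n z).val [MOD p ^ n] := by
  rw [← cast_toZModPow n m h, ZMod.cast_eq_val, ZMod.val_natCast]
  exact (Nat.mod_modEq _ _).symm

variable (hG : ∀ x : G, ∃ n : ℕ, p ^ n • x = 0)
include hG

noncomputable def padicSMul (z : ℤ_[p]) (x : G) : G :=
  (toZModPow (hG x).choose z).val • x

theorem padicSMul_eq {z : ℤ_[p]} {x : G} {n : ℕ} (hx : p ^ n • x = 0) :
    padicSMul hG z x = (toZModPow n z).val • x := by
  have hx' := (hG x).choose_spec
  rcases le_total n (hG x).choose with h | h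
  · exact nsmul_eq_nsmul_of_modEq (val_toZModPow_modEq h z) hx
  · exact (nsmul_eq_nsmul_of_modEq (val_toZModPow_modEq h z) hx').symm

theorem padicSMul_add (z : ℤ_[p]) (x y : G) :
    padicSMul hG z (x + y) = padicSMul hG z x + padicSMul hG z y := by
  obtain ⟨n, hx⟩ := hG x
  obtain ⟨m, hy⟩ := hG y
  have hx' : p ^ (n + m) • x = 0 := by rw [pow_add, mul_comm, mul_smul, hx, smul_zero]
  have hy' : p ^ (n + m) • y = 0 := by rw [pow_add, mul_smul, hy, smul_zero]
  have hxy : p ^ (n + m) • (x + y) = 0 := by rw [smul_add, hx', hy', add_zero]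
  rw [padicSMul_eq hG hx', padicSMul_eq hG hy', padicSMul_eq hG hxy, smul_add]

noncomputable def padicEnd : ℤ_[p] →+* AddMonoid.End G where
  toFun z :=
    { toFun := padicSMul hG z
      map_zero' := by rw [padicSMul_eq hG (n := 0) (smul_zero _), smul_zero]
      map_add' := padicSMul_add hG z }
  map_one' := AddMonoidHom.ext fun x => by
    obtain ⟨n, hx⟩ := hG x
    refine (padicSMul_eq hG hx).trans ((nsmul_eq_nsmul_of_modEq ?_ hx).trans (one_nsmul x))
    rw [map_one, ZMod.val_one_eq_one_mod]
    exact Nat.mod_modEq _ _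
  map_mul' z w := AddMonoidHom.ext fun x => by
    obtain ⟨n, hx⟩ := hG x
    have hwx : p ^ n • padicSMul hG w x = 0 := by
      rw [padicSMul_eq hG hx, smul_comm, hx, smul_zero]
    change padicSMul hG (z * w) x = padicSMul hG z (padicSMul hG w x)
    rw [padicSMul_eq hG hx, padicSMul_eq hG hwx, padicSMul_eq hG hx, smul_smul]
    refine nsmul_eq_nsmul_of_modEq ?_ hx
    rw [map_mul, ZMod.val_mul]
    exact Nat.mod_modEq _ _
  map_zero' := AddMonoidHom.ext fun x => by
    obtain ⟨n, hx⟩ := hG x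
    change padicSMul hG 0 x = 0
    rw [padicSMul_eq hG hx, map_zero, ZMod.val_zero, zero_smul]
  map_add' z w := AddMonoidHom.ext fun x => by
    obtain ⟨n, hx⟩ := hG x
    change padicSMul hG (z + w) x = padicSMul hG z x + padicSMul hG w x
    rw [padicSMul_eq hG hx, padicSMul_eq hG hx, padicSMul_eq hG hx, ← add_smul]
    refine nsmul_eq_nsmul_of_modEq ?_ hx
    rw [map_add, ZMod.val_add]
    exact Nat.mod_modEq _ _

end PadicAction

theorem exists_addEquiv_apply_apply_eq_of_sq_eq_add_one {R G : Type*} [Ring R] [AddCommGroup G]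
    (f : R →+* AddMonoid.End G) {z : R} (hz : z ^ 2 = z + 1) :
    ∃ φ : G ≃+ G, ∀ x, φ (φ x) = φ x + x := by
  have hleft : f (z - 1) * f z = 1 := by
    rw [← map_mul, sub_mul, one_mul, ← sq, hz, add_sub_cancel_left, map_one]
  have hright : f z * f (z - 1) = 1 := by
    rw [← map_mul, mul_sub, mul_one, ← sq, hz, add_sub_cancel_left, map_one]
  refine ⟨(f z).toAddEquiv (f (z - 1)) hleft hright, fun x => ?_⟩
  change (f z * f z) x = f z x + x
  rw [← map_mul, ← sq, hz, map_add, map_one]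
  rfl

theorem sq_eq_add_one_of_apply_eq_nsmul {G : Type*} [AddCommGroup G] (φ : G →+ G) {x : G}
    (hφ : φ (φ x) = φ x + x) {m : ℕ} (hm : φ x = m • x) :
    (m : ZMod (addOrderOf x)) ^ 2 = m + 1 := by
  have : (m * m) • x = (m + 1) • x := by
    rw [mul_nsmul', ← hm, ← map_nsmul, ← hm, hφ, add_nsmul, one_nsmul, hm]
  rw [sq, ← Nat.cast_mul, ← Nat.cast_add_one, ZMod.natCast_eq_natCast_iff]
  exact nsmul_eq_nsmul_iff_modEq.1 this

namespace PruferGroup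

variable {p : ℕ}

theorem exists_pow_nsmul_eq_zero (x : PruferGroup p) : ∃ n : ℕ, p ^ n • x = 0 := by
  obtain ⟨n, hn⟩ := x.2
  exact ⟨n, Subtype.ext hn⟩

variable [Fact p.Prime]

variable (p) in
def oneDiv : PruferGroup p :=
  ⟨((1 / p : ℚ) : AddCircle (1 : ℚ)), 1, by
    rw [pow_one, ← addOrderOf_dvd_iff_nsmul_eq_zero,
      AddCircle.addOrderOf_period_div (Fact.out : p.Prime).pos]⟩

theorem addOrderOf_oneDiv : addOrderOf (oneDiv p) = p := by
  rw [← AddSubgroup.addOrderOf_coe]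
  exact AddCircle.addOrderOf_period_div (Fact.out : p.Prime).pos

theorem exists_eq_nsmul_oneDiv {y : PruferGroup p} (hy : p • y = 0) :
    ∃ m : ℕ, y = m • oneDiv p := by
  have hy : p • (y : AddCircle (1 : ℚ)) = 0 := congrArg Subtype.val hy
  obtain ⟨m, -, hm⟩ := (AddCircle.nsmul_eq_zero_iff (Fact.out : p.Prime).pos).1 hy
  refine ⟨m, Subtype.ext ?_⟩
  rw [← hm, AddCircle.natCast_div_mul_eq_nsmul]
  rfl

theorem exists_sq_eq_add_one_of_apply_apply_eq (φ : PruferGroup p →+ PruferGroup p)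
    (hφ : ∀ x, φ (φ x) = φ x + x) : ∃ a : ZMod p, a ^ 2 = a + 1 := by
  have hp : p • oneDiv p = 0 := by
    simpa only [addOrderOf_oneDiv] using addOrderOf_nsmul_eq_zero (oneDiv p)
  obtain ⟨m, hm⟩ := exists_eq_nsmul_oneDiv (y := φ (oneDiv p)) (by
    rw [← map_nsmul, hp, map_zero])
  have := sq_eq_add_one_of_apply_eq_nsmul φ (hφ (oneDiv p)) hm
  rw [addOrderOf_oneDiv] at this
  exact ⟨m, this⟩

end PruferGroup

/-- for a prime `p ∉ {2, 5}`, the Prüfer `p`-group has an automorphism `φ`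
with `φ² = φ + 1` iff `p ≡ ±1 (mod 5)`. -/
theorem stmt7 (p : ℕ) (hp : p.Prime) (hp2 : p ≠ 2) (hp5 : p ≠ 5) :
    (∃ φ : PruferGroup p ≃+ PruferGroup p, ∀ x, φ (φ x) = φ x + x) ↔
      (p % 5 = 1 ∨ p % 5 = 4) := by
  have := Fact.mk hp
  have : Fact (Nat.Prime 5) := ⟨by norm_num⟩
  have : NeZero (2 : ZMod p) := ⟨by exact_mod_cast ZMod.prime_ne_zero p 2 hp2⟩
  have h5 : (5 : ZMod p) ≠ 0 := by exact_mod_cast ZMod.prime_ne_zero p 5 hp5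
  rw [← ZMod.isSquare_five_iff hp2 hp5, ← exists_sq_eq_add_one_iff_isSquare_five]
  constructor
  · rintro ⟨φ, hφ⟩
    exact PruferGroup.exists_sq_eq_add_one_of_apply_apply_eq φ.toAddMonoidHom hφ
  · rintro ⟨a, ha⟩
    obtain ⟨z, hz⟩ := PadicInt.exists_sq_eq_add_one h5 ha
    exact exists_addEquiv_apply_apply_eq_of_sq_eq_add_one
      (padicEnd PruferGroup.exists_pow_nsmul_eq_zero) hz
end

section
/- Let G be a group, V a faithful 3D-rotation module for G with axes A_g, and let A be an axis. Then the centralizer C_G(A) is a TI-subgroup: for any h ∈ G, either h·C_G(A)·h⁻¹ = C_G(A) or h·C_G(A)·h⁻¹ ∩ C_G(A) = {1}. -/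
open Pointwise

/-- A 3D-rotation module: each nontrivial `g` has a nontrivial axis `A_g ≤ V` such that
(1) `h • A_g = A_{hgh⁻¹}`, (2) `h` centralizes `A_g` iff `A_h = A_g`, and
(3) elements of `N_G(A_g) \ C_G(A_g)` invert `A_g`. -/
structure Rotation3DModule (G : Type*) [Group G] (V : Type*) [AddCommGroup V]
    [DistribMulAction G V] where
  axis : G → AddSubgroup V
  axis_ne_bot : ∀ g : G, g ≠ 1 → axis g ≠ ⊥
  axis_conj : ∀ g h : G, g ≠ 1 → h ≠ 1 → h • axis g = axis (h * g * h⁻¹)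
  cent_iff : ∀ g h : G, g ≠ 1 → h ≠ 1 → ((∀ v ∈ axis g, h • v = v) ↔ axis h = axis g)
  norm_inverts : ∀ g h : G, g ≠ 1 → h ≠ 1 → h • axis g = axis g →
    ¬ (∀ v ∈ axis g, h • v = v) → ∀ v ∈ axis g, h • v = -v

/-- The centralizer `C_G(A)` of a subgroup `A ≤ V` inside `G`. -/
def axisCent (G : Type*) [Group G] {V : Type*} [AddCommGroup V] [DistribMulAction G V]
    (A : AddSubgroup V) : Subgroup G where
  carrier := {h : G | ∀ v ∈ A, h • v = v}
  one_mem' := fun v _ => one_smul G v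
  mul_mem' := by
    intro a b ha hb v hv
    rw [mul_smul, hb v hv, ha v hv]
  inv_mem' := by
    intro a ha v hv
    conv_lhs => rw [← ha v hv]
    rw [inv_smul_smul]

/-- The normalizer `N_G(A)` of a subgroup `A ≤ V` inside `G`, i.e. the stabilizer of `A`
under the pointwise action of `G` on subgroups of `V`. -/
def axisNorm (G : Type*) [Group G] {V : Type*} [AddCommGroup V] [DistribMulAction G V]
    (A : AddSubgroup V) : Subgroup G := MulAction.stabilizer G A

/-- in a faithful 3D-rotation module, the centralizer of an axis is a
TI-subgroup: any conjugate of it either equals it or meets it trivially. -/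
theorem stmt9 {G V : Type*} [Group G] [AddCommGroup V] [DistribMulAction G V]
    (M : Rotation3DModule G V)
    (hfaithful : ∀ g : G, (∀ v : V, g • v = v) → g = 1)
    (g : G) (hg : g ≠ 1) :
    ∀ h : G, (axisCent G (M.axis g)).map (MulAut.conj h).toMonoidHom = axisCent G (M.axis g) ∨
      (axisCent G (M.axis g)).map (MulAut.conj h).toMonoidHom ⊓ axisCent G (M.axis g) = ⊥ := by
  intro h
  have hmap : ∀ A : AddSubgroup V,
      (axisCent G A).map (MulAut.conj h).toMonoidHom = axisCent G (h • A) := by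
    intro A
    ext x
    simp only [Subgroup.mem_map, axisCent, Subgroup.mem_mk, Set.mem_setOf_eq,
      MulEquiv.coe_toMonoidHom, MulAut.conj_apply]
    constructor
    · rintro ⟨a, ha, rfl⟩ w hw
      rw [AddSubgroup.mem_smul_pointwise_iff_exists] at hw
      obtain ⟨v, hv, rfl⟩ := hw
      rw [mul_smul, mul_smul, inv_smul_smul, ha v hv]
    · intro hx
      refine ⟨h⁻¹ * x * h, fun v hv => ?_, by group⟩
      have : x • (h • v) = h • v := hx _ (AddSubgroup.smul_mem_pointwise_smul v h A hv)
      rw [mul_smul, mul_smul, this, inv_smul_smul]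
  rcases eq_or_ne h 1 with rfl | hh
  · left
    rw [hmap, one_smul]
  rw [hmap, M.axis_conj g h hg hh]
  have hg' : h * g * h⁻¹ ≠ 1 := by
    intro hc
    apply hg
    have := congrArg (fun x => h⁻¹ * x * h) hc
    simpa [mul_assoc] using this
  by_cases heq : M.axis (h * g * h⁻¹) = M.axis g
  · left; rw [heq]
  · right
    rw [eq_bot_iff]
    intro k hk
    simp only [Subgroup.mem_inf] at hk
    simp only [Subgroup.mem_bot]
    by_contra hk1
    have h1 : M.axis k = M.axis (h * g * h⁻¹) :=
      (M.cent_iff _ k hg' hk1).mp hk.1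
    have h2 : M.axis k = M.axis g :=
      (M.cent_iff _ k hg hk1).mp hk.2
    exact heq (h1 ▸ h2)
end

section
/- Let G be a nontrivial finite group with a 3D-rotation module V. Then the nontrivial elements of G are partitioned by the sets C_G(A)* = C_G(A) \ {1} as A ranges over the distinct axes, and consequently |G| = 1 + Σ_{A ∈ 𝔸} (|C_G(A)| - 1), where 𝔸 is the set of axes. -/
open Pointwise

/-- for `G` a nontrivial finite group with a 3D-rotation module, the sets
`C_G(A) \ {1}`, as `A` ranges over the distinct axes, partition `G \ {1}`; consequently
`|G| = 1 + ∑_{A ∈ 𝔸} (|C_G(A)| - 1)`. -/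
theorem stmt11 {G V : Type*} [Group G] [Finite G] [Nontrivial G]
    [AddCommGroup V] [DistribMulAction G V] (M : Rotation3DModule G V) :
    (Set.Pairwise (M.axis '' {g : G | g ≠ 1}) fun A B =>
        Disjoint ((axisCent G A : Set G) \ {1}) ((axisCent G B : Set G) \ {1})) ∧
    (⋃ A ∈ M.axis '' {g : G | g ≠ 1}, ((axisCent G A : Set G) \ {1})) = {g : G | g ≠ 1} ∧
    ∀ s : Finset (AddSubgroup V), (↑s = M.axis '' {g : G | g ≠ 1}) →
      Nat.card G = 1 + ∑ A ∈ s, (Nat.card (axisCent G A) - 1) := by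

  classical
  have := Fintype.ofFinite G
  -- membership characterization
  have hmem : ∀ g h : G, g ≠ 1 → h ≠ 1 →
      (h ∈ axisCent G (M.axis g) ↔ M.axis h = M.axis g) := by
    intro g h hg hh
    exact M.cent_iff g h hg hh
  have hself : ∀ h : G, h ≠ 1 → h ∈ axisCent G (M.axis h) := by
    intro h hh
    exact (hmem h h hh hh).mpr rfl
  constructor
  · -- pairwise disjoint
    rintro A ⟨a, ha, rfl⟩ B ⟨b, hb, rfl⟩ hAB
    rw [Set.disjoint_left]
    rintro h ⟨hA, hh1⟩ ⟨hB, _⟩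
    simp only [Set.mem_singleton_iff] at hh1
    exact hAB (((hmem a h ha hh1).mp hA).symm.trans ((hmem b h hb hh1).mp hB))
  constructor
  · -- union
    ext h
    simp only [Set.mem_iUnion, Set.mem_image, Set.mem_setOf_eq, Set.mem_diff,
      Set.mem_singleton_iff, SetLike.mem_coe]
    constructor
    · rintro ⟨A, ⟨a, ha, rfl⟩, _, hh1⟩
      exact hh1
    · intro hh
      exact ⟨M.axis h, ⟨h, hh, rfl⟩, hself h hh, hh⟩
  · -- counting
    intro s hs
    have hmem_s : ∀ A ∈ s, ∃ a : G, a ≠ 1 ∧ M.axis a = A := by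
      intro A hA
      have : A ∈ M.axis '' {g : G | g ≠ 1} := hs ▸ hA
      obtain ⟨a, ha, rfl⟩ := this
      exact ⟨a, ha, rfl⟩
    set F : AddSubgroup V → Finset G :=
      fun A => Finset.univ.filter (fun h => h ∈ axisCent G A ∧ h ≠ 1) with hF
    have hdisj : ∀ A ∈ s, ∀ B ∈ s, A ≠ B → Disjoint (F A) (F B) := by
      intro A hA B hB hAB
      obtain ⟨a, ha, rfl⟩ := hmem_s A hA
      obtain ⟨b, hb, rfl⟩ := hmem_s B hB
      rw [Finset.disjoint_left]
      intro h hhA hhB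
      simp only [hF, Finset.mem_filter] at hhA hhB
      exact hAB (((hmem a h ha hhA.2.2).mp hhA.2.1).symm.trans
        ((hmem b h hb hhB.2.2).mp hhB.2.1))
    have huniv : Finset.univ = insert 1 (s.biUnion F) := by
      ext h
      simp only [Finset.mem_insert, Finset.mem_biUnion, hF, Finset.mem_filter,
        Finset.mem_univ, true_and]
      constructor
      · intro _
        by_cases hh : h = 1
        · exact Or.inl hh
        · refine Or.inr ⟨M.axis h, ?_, hself h hh, hh⟩
          rw [← Finset.mem_coe, hs]
          exact ⟨h, hh, rfl⟩
      · intro _; exact trivial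
    have h1not : (1 : G) ∉ s.biUnion F := by
      simp [hF]
    have hcardF : ∀ A ∈ s, (F A).card = Nat.card (axisCent G A) - 1 := by
      intro A hA
      have hcent : Nat.card (axisCent G A)
          = (Finset.univ.filter (fun h => h ∈ axisCent G A)).card := by
        rw [Nat.card_eq_fintype_card]
        exact Fintype.card_subtype _
      have hFA : F A = (Finset.univ.filter (fun h => h ∈ axisCent G A)).erase 1 := by
        ext h
        simp only [hF, Finset.mem_filter, Finset.mem_erase, Finset.mem_univ, true_and]
        tauto
      rw [hFA, hcent, Finset.card_erase_of_mem]
      simp only [Finset.mem_filter, Finset.mem_univ, true_and]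
      exact (axisCent G A).one_mem
    calc Nat.card G = Fintype.card G := Nat.card_eq_fintype_card
      _ = (insert 1 (s.biUnion F)).card := by rw [← huniv]; rfl
      _ = 1 + (s.biUnion F).card := by
          rw [Finset.card_insert_of_notMem h1not, add_comm]
      _ = 1 + ∑ A ∈ s, (F A).card := by rw [Finset.card_biUnion hdisj]
      _ = 1 + ∑ A ∈ s, (Nat.card (axisCent G A) - 1) := by
          rw [Finset.sum_congr rfl hcardF]
end

section
/- Let G be a nontrivial finite group with a nonaxial 3D-rotation module, let r be the number of G-orbits of positive-type axes (N_G(A) = C_G(A)) and s the number of G-orbits of negative-type axes (index 2). Then 1 - r - s/2 = 1/|G| - Σᵢ 1/|N_G(Aᵢ)| - Σⱼ 1/|N_G(Bⱼ)|, where the Aᵢ and Bⱼ are orbit representatives of the positive- and negative-type axes respectively. -/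
open Pointwise

section Aux
variable {G V : Type*} [Group G] [AddCommGroup V] [DistribMulAction G V]

lemma mem_axisCent {A : AddSubgroup V} {h : G} : h ∈ axisCent G A ↔ ∀ v ∈ A, h • v = v := Iff.rfl

lemma cent_smul_self {A : AddSubgroup V} {h : G} (hh : h ∈ axisCent G A) : h • A = A := by
  ext v
  rw [AddSubgroup.mem_pointwise_smul_iff_inv_smul_mem]
  constructor
  · intro hv
    have := hh _ hv
    rw [smul_inv_smul] at this
    rw [this]; exact hv
  · intro hv
    have : h⁻¹ ∈ axisCent G A := (axisCent G A).inv_mem hh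
    rw [this v hv]; exact hv

lemma cent_le_norm (A : AddSubgroup V) : axisCent G A ≤ axisNorm G A := fun _ hh => cent_smul_self hh

lemma cent_smul (h : G) (A : AddSubgroup V) :
    axisCent G (h • A) = (axisCent G A).map (MulAut.conj h).toMonoidHom := by
  ext k
  simp only [Subgroup.mem_map, MulEquiv.coe_toMonoidHom, MulAut.conj_apply, mem_axisCent]
  constructor
  · intro hk
    refine ⟨h⁻¹ * k * h, fun v hv => ?_, by group⟩
    have := hk (h • v) (by rw [AddSubgroup.mem_pointwise_smul_iff_inv_smul_mem, inv_smul_smul]; exact hv)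
    rw [mul_smul, mul_smul]
    rw [← smul_left_cancel_iff h, smul_inv_smul, this]
  · rintro ⟨x, hx, rfl⟩ v hv
    rw [AddSubgroup.mem_pointwise_smul_iff_inv_smul_mem] at hv
    have := hx _ hv
    calc (h * x * h⁻¹) • v = h • x • h⁻¹ • v := by rw [mul_smul, mul_smul]
    _ = v := by rw [this, smul_inv_smul]

lemma axisNorm_smul (h : G) (A : AddSubgroup V) :
    axisNorm G (h • A) = (axisNorm G A).map (MulAut.conj h).toMonoidHom :=
  MulAction.stabilizer_smul_eq_stabilizer_map_conj h A

lemma card_cent_smul (h : G) (A : AddSubgroup V) :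
    Nat.card (axisCent G (h • A)) = Nat.card (axisCent G A) := by
  rw [cent_smul]
  exact (Nat.card_congr ((Subgroup.equivMapOfInjective _ _ (MulAut.conj h).injective).toEquiv)).symm

lemma card_norm_smul (h : G) (A : AddSubgroup V) :
    Nat.card (axisNorm G (h • A)) = Nat.card (axisNorm G A) := by
  rw [axisNorm_smul]
  exact (Nat.card_congr ((Subgroup.equivMapOfInjective _ _ (MulAut.conj h).injective).toEquiv)).symm

lemma pos_smul_iff (h : G) (A : AddSubgroup V) :
    (axisNorm G (h • A) = axisCent G (h • A)) ↔ (axisNorm G A = axisCent G A) := by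
  rw [axisNorm_smul, cent_smul]
  exact (Subgroup.map_injective (MulAut.conj h).injective).eq_iff

lemma mem_cent_axis_iff (M : Rotation3DModule G V) {g : G} (hg : g ≠ 1) {h : G} :
    h ∈ axisCent G (M.axis g) ↔ h = 1 ∨ (h ≠ 1 ∧ M.axis h = M.axis g) := by
  constructor
  · intro hh
    rcases eq_or_ne h 1 with h1 | h1
    · exact Or.inl h1
    · exact Or.inr ⟨h1, (M.cent_iff g h hg h1).mp hh⟩
  · rintro (rfl | ⟨h1, hax⟩)
    · exact (axisCent G _).one_mem
    · exact (M.cent_iff g h hg h1).mpr hax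

lemma card_norm_of_neg [Finite G] (M : Rotation3DModule G V) {C : AddSubgroup V}
    (hC : ∃ g : G, g ≠ 1 ∧ M.axis g = C) (hNC : axisNorm G C ≠ axisCent G C) :
    Nat.card (axisNorm G C) = 2 * Nat.card (axisCent G C) := by
  obtain ⟨g, hg1, rfl⟩ := hC
  obtain ⟨h, hhN, hhC⟩ := SetLike.exists_of_lt (lt_of_le_of_ne (cent_le_norm _) (Ne.symm hNC))
  have hh1 : h ≠ 1 := fun e => hhC (e ▸ (axisCent G _).one_mem)
  have hstab : h • M.axis g = M.axis g := hhN
  have hinv : ∀ v ∈ M.axis g, h • v = -v := M.norm_inverts g h hg1 hh1 hstab hhC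
  have hinvinv : ∀ v ∈ M.axis g, h⁻¹ • v = -v := by
    intro v hv
    have hmem : h⁻¹ • v ∈ M.axis g := by
      rw [← hstab] at hv
      exact AddSubgroup.mem_pointwise_smul_iff_inv_smul_mem.mp hv
    have := hinv _ hmem
    rw [smul_inv_smul] at this
    rw [← neg_eq_iff_eq_neg] at this
    rw [← this]
  have key : ∀ n, n ∈ axisNorm G (M.axis g) → n ∉ axisCent G (M.axis g) →
      h⁻¹ * n ∈ axisCent G (M.axis g) := by
    intro n hnN hnC
    have hn1 : n ≠ 1 := fun e => hnC (e ▸ (axisCent G _).one_mem)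
    have hninv : ∀ v ∈ M.axis g, n • v = -v := M.norm_inverts g n hg1 hn1 hnN hnC
    intro v hv
    rw [mul_smul, hninv v hv, smul_neg, hinvinv v hv, neg_neg]
  have e : ((axisCent G (M.axis g)) ⊕ (axisCent G (M.axis g))) ≃ (axisNorm G (M.axis g)) := by
    refine Equiv.ofBijective
      (Sum.elim (fun x => ⟨x.1, cent_le_norm _ x.2⟩)
        (fun x => ⟨h * x.1, mul_mem hhN (cent_le_norm _ x.2)⟩)) ⟨?_, ?_⟩
    · rintro (x | x) (y | y) hxy <;> simp only [Sum.elim_inl, Sum.elim_inr, Subtype.mk.injEq] at hxy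
      · exact congrArg Sum.inl (Subtype.ext hxy)
      · exfalso; apply hhC
        have he : (h : G) = x.1 * (y.1)⁻¹ := by rw [hxy]; group
        rw [he]; exact mul_mem x.2 ((axisCent G _).inv_mem y.2)
      · exfalso; apply hhC
        have he : (h : G) = y.1 * (x.1)⁻¹ := by rw [← hxy]; group
        rw [he]; exact mul_mem y.2 ((axisCent G _).inv_mem x.2)
      · exact congrArg Sum.inr (Subtype.ext (mul_left_cancel hxy))
    · rintro ⟨n, hn⟩
      by_cases hnC : n ∈ axisCent G (M.axis g)
      · exact ⟨Sum.inl ⟨n, hnC⟩, rfl⟩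
      · exact ⟨Sum.inr ⟨h⁻¹ * n, key n hn hnC⟩, by simp [mul_inv_cancel_left]⟩
  rw [← Nat.card_congr e, Nat.card_sum, two_mul]

end Aux

section Count

lemma nat_card_sigma {α : Type*} [Fintype α] (β : α → Type*) [∀ a, Finite (β a)] :
    Nat.card ((a : α) × β a) = ∑ a : α, Nat.card (β a) := by
  letI : ∀ a, Fintype (β a) := fun a => Fintype.ofFinite _
  simp [Nat.card_eq_fintype_card, Fintype.card_sigma]

lemma nat_card_ne {α : Type*} [Finite α] (a : α) : Nat.card {x : α // x ≠ a} = Nat.card α - 1 := by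
  classical
  letI := Fintype.ofFinite α
  simp [Nat.card_eq_fintype_card, Fintype.card_subtype_compl]

lemma nat_card_subgroup_ne_one {G : Type*} [Group G] [Finite G] (H : Subgroup G) :
    Nat.card {x : G // x ∈ H ∧ x ≠ 1} = Nat.card H - 1 := by
  have e : {x : G // x ∈ H ∧ x ≠ 1} ≃ {y : H // y ≠ 1} :=
    { toFun := fun x => ⟨⟨x.1, x.2.1⟩, fun hy => x.2.2 (congrArg Subtype.val hy)⟩
      invFun := fun y => ⟨y.1.1, y.1.2, fun hx => y.2 (Subtype.ext hx)⟩
      left_inv := fun x => rfl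
      right_inv := fun y => rfl }
  rw [Nat.card_congr e, nat_card_ne]

lemma orbit_stab {G : Type*} [Group G] {α : Type*} [MulAction G α] (a : α) :
    Nat.card (MulAction.orbit G a) * Nat.card (MulAction.stabilizer G a) = Nat.card G := by
  rw [Nat.card_congr (MulAction.orbitEquivQuotientStabilizer G a)]
  exact (Subgroup.card_eq_card_quotient_mul_card_subgroup _).symm

variable {G V : Type*} [Group G] [AddCommGroup V] [DistribMulAction G V]

lemma axis_smul_witness (M : Rotation3DModule G V) {C0 : AddSubgroup V} (h : G)
    (hC : ∃ g : G, g ≠ 1 ∧ M.axis g = C0) : ∃ g : G, g ≠ 1 ∧ M.axis g = h • C0 := by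
  obtain ⟨g0, hg0, rfl⟩ := hC
  rcases eq_or_ne h 1 with rfl | hh
  · exact ⟨g0, hg0, (one_smul _ _).symm⟩
  · refine ⟨h * g0 * h⁻¹, ?_, (M.axis_conj g0 h hg0 hh).symm⟩
    intro e
    apply hg0
    have : g0 = h⁻¹ * (h * g0 * h⁻¹) * h := by group
    rw [this, e]
    group

lemma fiber_count [Finite G] (M : Rotation3DModule G V) {C : AddSubgroup V}
    (hC : ∃ g : G, g ≠ 1 ∧ M.axis g = C) :
    Nat.card {g : G // g ≠ 1 ∧ M.axis g = C} = Nat.card (axisCent G C) - 1 := by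
  obtain ⟨g0, hg0, rfl⟩ := hC
  rw [← nat_card_subgroup_ne_one (axisCent G (M.axis g0))]
  apply Nat.card_congr
  exact
    { toFun := fun g => ⟨g.1, (mem_cent_axis_iff M hg0).mpr (Or.inr ⟨g.2.1, g.2.2⟩), g.2.1⟩
      invFun := fun x => ⟨x.1, x.2.2, by
        rcases (mem_cent_axis_iff M hg0).mp x.2.1 with h1 | h2
        · exact absurd h1 x.2.2
        · exact h2.2⟩
      left_inv := fun g => rfl
      right_inv := fun x => rfl }

lemma orbit_count [Finite G] (M : Rotation3DModule G V) {A0 : AddSubgroup V}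
    (hA0 : ∃ g : G, g ≠ 1 ∧ M.axis g = A0) :
    Nat.card {g : G // g ≠ 1 ∧ M.axis g ∈ MulAction.orbit G A0} =
      Nat.card (MulAction.orbit G A0) * (Nat.card (axisCent G A0) - 1) := by
  haveI : Finite (MulAction.orbit G A0) := Set.finite_range _
  letI := Fintype.ofFinite (MulAction.orbit G A0)
  set S := {g : G // g ≠ 1 ∧ M.axis g ∈ MulAction.orbit G A0} with hS
  let p : S → MulAction.orbit G A0 := fun g => ⟨M.axis g.1, g.2.2⟩
  rw [← Nat.card_congr (Equiv.sigmaFiberEquiv p), nat_card_sigma]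
  have hCeq : ∀ C : MulAction.orbit G A0,
      Nat.card {g : S // p g = C} = Nat.card (axisCent G A0) - 1 := by
    intro C
    obtain ⟨h, hh⟩ := MulAction.mem_orbit_iff.mp C.2
    have hw : ∃ g : G, g ≠ 1 ∧ M.axis g = C.1 := by
      rw [← hh]; exact axis_smul_witness M h hA0
    have e : {g : S // p g = C} ≃ {g : G // g ≠ 1 ∧ M.axis g = C.1} :=
      { toFun := fun g => ⟨g.1.1, g.1.2.1, congrArg Subtype.val g.2⟩
        invFun := fun x => ⟨⟨x.1, x.2.1, by rw [x.2.2]; exact C.2⟩, Subtype.ext x.2.2⟩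
        left_inv := fun g => rfl
        right_inv := fun x => rfl }
    rw [Nat.card_congr e, fiber_count M hw, ← hh, card_cent_smul]
  rw [Finset.sum_congr rfl (fun C _ => hCeq C)]
  simp [Finset.sum_const, Nat.card_eq_fintype_card, mul_comm]

end Count
/-- STATEMENT: orbit equation setup. -/
theorem stmt12 {G V : Type*} [Group G] [Finite G] [Nontrivial G]
    [AddCommGroup V] [DistribMulAction G V] (M : Rotation3DModule G V)
    (hnonaxial : ∀ g : G, g ≠ 1 → ∃ h : G, h • M.axis g ≠ M.axis g)
    (r s : ℕ) (A : Fin r → AddSubgroup V) (B : Fin s → AddSubgroup V)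
    -- the `A i` are positive-type axes (`N_G(A) = C_G(A)`) …
    (hA : ∀ i, (∃ g : G, g ≠ 1 ∧ M.axis g = A i) ∧ axisNorm G (A i) = axisCent G (A i))
    -- … forming a system of representatives of the `G`-orbits of positive-type axes
    (hAorb : ∀ C : AddSubgroup V, (∃ g : G, g ≠ 1 ∧ M.axis g = C) →
      axisNorm G C = axisCent G C → ∃! i : Fin r, ∃ h : G, h • A i = C)
    -- the `B j` are negative-type axes (`N_G(B) ≠ C_G(B)`) …
    (hB : ∀ j, (∃ g : G, g ≠ 1 ∧ M.axis g = B j) ∧ axisNorm G (B j) ≠ axisCent G (B j))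
    -- … forming a system of representatives of the `G`-orbits of negative-type axes
    (hBorb : ∀ C : AddSubgroup V, (∃ g : G, g ≠ 1 ∧ M.axis g = C) →
      axisNorm G C ≠ axisCent G C → ∃! j : Fin s, ∃ h : G, h • B j = C) :
    (1 : ℚ) - r - s / 2 =
      1 / (Nat.card G : ℚ) - (∑ i : Fin r, 1 / (Nat.card (axisNorm G (A i)) : ℚ)) -
        ∑ j : Fin s, 1 / (Nat.card (axisNorm G (B j)) : ℚ) := by
  classical
  have hNpos : 0 < Nat.card G := Nat.card_pos
  let f : {g : G // g ≠ 1} → Fin r ⊕ Fin s := fun g =>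
    if hp : axisNorm G (M.axis g.1) = axisCent G (M.axis g.1) then
      Sum.inl (hAorb (M.axis g.1) ⟨g.1, g.2, rfl⟩ hp).exists.choose
    else
      Sum.inr (hBorb (M.axis g.1) ⟨g.1, g.2, rfl⟩ hp).exists.choose
  have hfl : ∀ (g : {g : G // g ≠ 1}) (i : Fin r),
      f g = Sum.inl i ↔ ∃ h : G, h • A i = M.axis g.1 := by
    intro g i
    by_cases hp : axisNorm G (M.axis g.1) = axisCent G (M.axis g.1)
    · simp only [f, dif_pos hp, Sum.inl.injEq]
      constructor
      · rintro rfl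
        exact (hAorb (M.axis g.1) ⟨g.1, g.2, rfl⟩ hp).exists.choose_spec
      · intro hh
        exact ((hAorb (M.axis g.1) ⟨g.1, g.2, rfl⟩ hp).unique
          (hAorb (M.axis g.1) ⟨g.1, g.2, rfl⟩ hp).exists.choose_spec hh)
    · simp only [f, dif_neg hp]
      constructor
      · intro h; exact absurd h (by simp)
      · rintro ⟨h, hh⟩
        exfalso
        exact hp (by rw [← hh]; exact (pos_smul_iff h (A i)).mpr (hA i).2)
  have hfr : ∀ (g : {g : G // g ≠ 1}) (j : Fin s),
      f g = Sum.inr j ↔ ∃ h : G, h • B j = M.axis g.1 := by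
    intro g j
    by_cases hp : axisNorm G (M.axis g.1) = axisCent G (M.axis g.1)
    · simp only [f, dif_pos hp]
      constructor
      · intro h; exact absurd h (by simp)
      · rintro ⟨h, hh⟩
        exfalso
        exact (hB j).2 ((pos_smul_iff h (B j)).mp (by rw [hh]; exact hp))
    · simp only [f, dif_neg hp, Sum.inr.injEq]
      constructor
      · rintro rfl
        exact (hBorb (M.axis g.1) ⟨g.1, g.2, rfl⟩ hp).exists.choose_spec
      · intro hh
        exact ((hBorb (M.axis g.1) ⟨g.1, g.2, rfl⟩ hp).unique
          (hBorb (M.axis g.1) ⟨g.1, g.2, rfl⟩ hp).exists.choose_spec hh)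
  have split : Nat.card {g : G // g ≠ 1} =
      (∑ i : Fin r, Nat.card {g : {g : G // g ≠ 1} // f g = Sum.inl i}) +
      ∑ j : Fin s, Nat.card {g : {g : G // g ≠ 1} // f g = Sum.inr j} := by
    rw [← Nat.card_congr (Equiv.sigmaFiberEquiv f), nat_card_sigma, Fintype.sum_sum_type]
  have cardA : ∀ i, Nat.card {g : {g : G // g ≠ 1} // f g = Sum.inl i} =
      Nat.card (MulAction.orbit G (A i)) * (Nat.card (axisNorm G (A i)) - 1) := by
    intro i
    have e : {g : {g : G // g ≠ 1} // f g = Sum.inl i} ≃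
        {g : G // g ≠ 1 ∧ M.axis g ∈ MulAction.orbit G (A i)} :=
      { toFun := fun g => ⟨g.1.1, g.1.2, MulAction.mem_orbit_iff.mpr ((hfl g.1 i).mp g.2)⟩
        invFun := fun x => ⟨⟨x.1, x.2.1⟩, (hfl ⟨x.1, x.2.1⟩ i).mpr (MulAction.mem_orbit_iff.mp x.2.2)⟩
        left_inv := fun g => rfl
        right_inv := fun x => rfl }
    rw [Nat.card_congr e, orbit_count M (hA i).1, (hA i).2]
  have cardB : ∀ j, Nat.card {g : {g : G // g ≠ 1} // f g = Sum.inr j} =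
      Nat.card (MulAction.orbit G (B j)) * (Nat.card (axisCent G (B j)) - 1) := by
    intro j
    have e : {g : {g : G // g ≠ 1} // f g = Sum.inr j} ≃
        {g : G // g ≠ 1 ∧ M.axis g ∈ MulAction.orbit G (B j)} :=
      { toFun := fun g => ⟨g.1.1, g.1.2, MulAction.mem_orbit_iff.mpr ((hfr g.1 j).mp g.2)⟩
        invFun := fun x => ⟨⟨x.1, x.2.1⟩, (hfr ⟨x.1, x.2.1⟩ j).mpr (MulAction.mem_orbit_iff.mp x.2.2)⟩
        left_inv := fun g => rfl
        right_inv := fun x => rfl }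
    rw [Nat.card_congr e, orbit_count M (hB j).1]
  have hBcard : ∀ j, Nat.card (axisNorm G (B j)) = 2 * Nat.card (axisCent G (B j)) :=
    fun j => card_norm_of_neg M (hB j).1 (hB j).2
  have hosA : ∀ i, Nat.card (MulAction.orbit G (A i)) * Nat.card (axisNorm G (A i)) = Nat.card G :=
    fun i => orbit_stab (A i)
  have hosB : ∀ j, Nat.card (MulAction.orbit G (B j)) * Nat.card (axisNorm G (B j)) = Nat.card G :=
    fun j => orbit_stab (B j)
  have hniA : ∀ i, 0 < Nat.card (axisNorm G (A i)) := fun i => Nat.card_pos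
  have hnjB : ∀ j, 0 < Nat.card (axisNorm G (B j)) := fun j => Nat.card_pos
  have hcjB : ∀ j, 0 < Nat.card (axisCent G (B j)) := fun j => Nat.card_pos
  have main : Nat.card G - 1 =
      (∑ i : Fin r, Nat.card (MulAction.orbit G (A i)) * (Nat.card (axisNorm G (A i)) - 1)) +
      ∑ j : Fin s, Nat.card (MulAction.orbit G (B j)) * (Nat.card (axisCent G (B j)) - 1) := by
    rw [← nat_card_ne (1 : G), split]
    exact congrArg₂ (· + ·) (Finset.sum_congr rfl fun i _ => cardA i)
      (Finset.sum_congr rfl fun j _ => cardB j)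
  have keyA : ∀ i : Fin r,
      ((Nat.card (MulAction.orbit G (A i)) * (Nat.card (axisNorm G (A i)) - 1) : ℕ) : ℚ) =
        (Nat.card G : ℚ) - (Nat.card G : ℚ) * (1 / (Nat.card (axisNorm G (A i)) : ℚ)) := by
    intro i
    have hnne : ((Nat.card (axisNorm G (A i)) : ℚ)) ≠ 0 := by
      exact_mod_cast (hniA i).ne'
    have ho : ((Nat.card (MulAction.orbit G (A i)) : ℚ)) * (Nat.card (axisNorm G (A i)) : ℚ) =
        (Nat.card G : ℚ) := by exact_mod_cast hosA i
    have h2 : (Nat.card G : ℚ) * (1 / (Nat.card (axisNorm G (A i)) : ℚ)) =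
        (Nat.card (MulAction.orbit G (A i)) : ℚ) := by
      rw [← ho]; field_simp
    rw [Nat.cast_mul, Nat.cast_sub (hniA i), h2]
    push_cast
    linear_combination ho
  have keyB : ∀ j : Fin s,
      ((Nat.card (MulAction.orbit G (B j)) * (Nat.card (axisCent G (B j)) - 1) : ℕ) : ℚ) =
        (Nat.card G : ℚ) / 2 - (Nat.card G : ℚ) * (1 / (Nat.card (axisNorm G (B j)) : ℚ)) := by
    intro j
    have hnne : ((Nat.card (axisNorm G (B j)) : ℚ)) ≠ 0 := by
      exact_mod_cast (hnjB j).ne'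
    have ho : ((Nat.card (MulAction.orbit G (B j)) : ℚ)) * (Nat.card (axisNorm G (B j)) : ℚ) =
        (Nat.card G : ℚ) := by exact_mod_cast hosB j
    have hc : ((Nat.card (axisNorm G (B j)) : ℚ)) = 2 * (Nat.card (axisCent G (B j)) : ℚ) := by
      exact_mod_cast hBcard j
    have h2 : (Nat.card G : ℚ) * (1 / (Nat.card (axisNorm G (B j)) : ℚ)) =
        (Nat.card (MulAction.orbit G (B j)) : ℚ) := by
      rw [← ho]; field_simp
    rw [Nat.cast_mul, Nat.cast_sub (hcjB j), h2]
    push_cast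
    linear_combination (1/2 : ℚ) * ho - ((Nat.card (MulAction.orbit G (B j)) : ℚ)/2) * hc
  have key : (Nat.card G : ℚ) - 1 =
      (∑ i : Fin r, ((Nat.card G : ℚ) - (Nat.card G : ℚ) * (1 / (Nat.card (axisNorm G (A i)) : ℚ)))) +
      ∑ j : Fin s, ((Nat.card G : ℚ) / 2 - (Nat.card G : ℚ) * (1 / (Nat.card (axisNorm G (B j)) : ℚ))) := by
    calc (Nat.card G : ℚ) - 1 = ((Nat.card G - 1 : ℕ) : ℚ) := by
          rw [Nat.cast_sub hNpos]; norm_num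
      _ = (((∑ i : Fin r, Nat.card (MulAction.orbit G (A i)) * (Nat.card (axisNorm G (A i)) - 1)) +
            ∑ j : Fin s, Nat.card (MulAction.orbit G (B j)) * (Nat.card (axisCent G (B j)) - 1) : ℕ) : ℚ) := by
          rw [main]
      _ = _ := by
          rw [Nat.cast_add, Nat.cast_sum, Nat.cast_sum]
          exact congrArg₂ (· + ·) (Finset.sum_congr rfl fun i _ => keyA i)
            (Finset.sum_congr rfl fun j _ => keyB j)
  have key2 : (Nat.card G : ℚ) - 1 =
      (r : ℚ) * (Nat.card G : ℚ) -
        (Nat.card G : ℚ) * (∑ i : Fin r, 1 / (Nat.card (axisNorm G (A i)) : ℚ)) +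
      ((s : ℚ) * ((Nat.card G : ℚ) / 2) -
        (Nat.card G : ℚ) * (∑ j : Fin s, 1 / (Nat.card (axisNorm G (B j)) : ℚ))) := by
    rw [key]
    simp only [Finset.sum_sub_distrib, ← Finset.mul_sum, Finset.sum_const, Finset.card_univ,
      Fintype.card_fin, nsmul_eq_mul]
  have hNne : (Nat.card G : ℚ) ≠ 0 := by exact_mod_cast hNpos.ne'
  have hinv : (Nat.card G : ℚ) * (1 / (Nat.card G : ℚ)) = 1 := by field_simp
  apply mul_left_cancel₀ hNne
  rw [mul_sub, mul_sub, mul_sub, mul_sub]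
  linear_combination key2 - hinv
end

section
/- Let V be a uniquely 2-divisible Alt(5)-module satisfying the normalizer assumption. Then in End(V), the sum of all 60 group elements Σ_{g ∈ Alt(5)} g equals 0. -/
/-- The alternating group `Alt(5)`. -/
abbrev A5 : Type := ↥(alternatingGroup (Fin 5))

/-- The trace map `tr_g = 1 + g + ⋯ + g^(|g|-1)`. -/
noncomputable def traceMap {G V : Type*} [Group G] [AddCommGroup V] [DistribMulAction G V]
    (g : G) (v : V) : V := ∑ i ∈ Finset.range (orderOf g), g ^ i • v

/-- The normalizer assumption: whenever `V` is `|g|`-divisible for nontrivial `g ∈ Alt(5)`,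
the elements of `N_{Alt(5)}(⟨g⟩) \ ⟨g⟩` invert `tr_g(V)`. -/
def NormalizerAssumption (V : Type*) [AddCommGroup V] [DistribMulAction A5 V] : Prop :=
  ∀ g : A5, g ≠ 1 → (∀ v : V, ∃ w : V, v = orderOf g • w) →
    ∀ α : A5, α ∈ Subgroup.normalizer (Subgroup.zpowers g : Set A5) → α ∉ Subgroup.zpowers g →
      ∀ v : V, α • traceMap g v = - traceMap g v

/-!
The sum `w = ∑ g • v` is fixed by `Alt(5)`. The involution `g = (0 1)(2 3)` commutes with
`α = (0 2)(1 3) ∉ ⟨g⟩`, so the normalizer assumption gives `α • tr_g w = -tr_g w`. Since `w` is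
fixed, `tr_g w = 2 • w` is fixed by `α` too, hence `4 • w = 0` and `w = 0` by unique
2-divisibility.
-/

open Subgroup

theorem Finset.smul_sum_perm {G V : Type*} [Group G] [Fintype G] [AddCommMonoid V]
    [DistribMulAction G V] (v : V) (h : G) : h • ∑ g : G, g • v = ∑ g : G, g • v := by
  simp only [Finset.smul_sum, smul_smul]
  exact Fintype.sum_bijective (h * ·) (Group.mulLeft_bijective h) _ _ fun _ ↦ rfl

theorem traceMap_of_smul_eq {G V : Type*} [Group G] [AddCommGroup V] [DistribMulAction G V]
    {g : G} {w : V} (hw : g • w = w) : traceMap g w = orderOf g • w := by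
  simp [traceMap, fun i : ℕ ↦ smul_eq_self_of_mem_zpowers (npow_mem_zpowers g i) hw]

theorem eq_zero_of_eq_neg_of_two_nsmul_injective {V : Type*} [AddCommGroup V]
    (h2 : Function.Injective (fun v : V => 2 • v)) {x : V} (hx : x = -x) : x = 0 :=
  h2 <| by simpa [two_smul] using (eq_neg_iff_add_eq_zero.mp hx)

theorem mem_normalizer_zpowers_of_commute {G : Type*} [Group G] {a g : G} (h : Commute a g) :
    a ∈ normalizer (zpowers g : Set G) := by
  refine centralizer_le_normalizer _ <| mem_centralizer_iff.mpr ?_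
  rintro _ ⟨k, rfl⟩
  exact (h.zpow_right k).eq.symm

theorem A5.exists_involution_normalizer_not_mem_zpowers :
    ∃ g α : A5, orderOf g = 2 ∧ α ∈ normalizer (zpowers g : Set A5) ∧ α ∉ zpowers g := by
  let g : A5 := ⟨Equiv.swap 0 1 * Equiv.swap 2 3,
    Equiv.Perm.mem_alternatingGroup.mpr (by decide)⟩
  let α : A5 := ⟨Equiv.swap 0 2 * Equiv.swap 1 3,
    Equiv.Perm.mem_alternatingGroup.mpr (by decide)⟩
  have hg : orderOf g = 2 := orderOf_eq_prime (by decide) (by decide)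
  refine ⟨g, α, hg, mem_normalizer_zpowers_of_commute (by decide : α * g = g * α), ?_⟩
  rw [mem_zpowers_iff_mem_range_orderOf, hg]
  decide

theorem A5.eq_zero_of_forall_smul_eq_self {V : Type*} [AddCommGroup V] [DistribMulAction A5 V]
    (h2 : Function.Bijective (fun v : V => 2 • v)) (hNA : NormalizerAssumption V) {w : V}
    (hw : ∀ h : A5, h • w = w) : w = 0 := by
  obtain ⟨g, α, hg, hαN, hαg⟩ := exists_involution_normalizer_not_mem_zpowers
  have hg1 : g ≠ 1 := by rintro rfl; simp at hg
  have hdiv : ∀ v : V, ∃ u : V, v = orderOf g • u := fun v ↦ by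
    obtain ⟨u, hu⟩ := h2.2 v
    exact ⟨u, by rw [hg, ← hu]⟩
  have hinv := hNA g hg1 hdiv α hαN hαg w
  rw [traceMap_of_smul_eq (hw g), hg, smul_comm, hw] at hinv
  exact h2.1 <| by simpa using eq_zero_of_eq_neg_of_two_nsmul_injective h2.1 hinv

/-- for a uniquely 2-divisible `Alt(5)`-module `V` satisfying the normalizer
assumption, the sum of all 60 group elements acts as `0` on `V`. -/
theorem stmt16 {V : Type*} [AddCommGroup V] [DistribMulAction A5 V]
    (h2div : Function.Bijective (fun v : V => 2 • v))
    (hNA : NormalizerAssumption V) :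
    ∀ v : V, ∑ g : A5, g • v = 0 :=
  fun v ↦ A5.eq_zero_of_forall_smul_eq_self h2div hNA (Finset.smul_sum_perm v)
end
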